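/- arXiv:1403.3265 — 6 statements merged into one kernel-verified Lean document; each statement's English description precedes it below -/
import Mathlib

section
/- Let λ, λ̃, μ, θ, ψ > 0 with λ = λ̃, and define π(n,1) = K · e^{−λ/μ}(λ/μ)^n/n! · (μθ/(μθ+λψ)) and π(n,0) = K · e^{−λ/μ}(λ/μ)^{n−1}/(n−1)! · (λψ/(μθ+λψ)) for n ≥ 1 (with π(0,0)=0), K a normalizing constant equal to 1. Then these probabilities satisfy the steady-state master equation: for all n ≥ 1, π(n,1)(n(ψ+μ)+λ) = π(n−1,1)λ + π(n+1,1)(n+1)μ + π(n,0)θ, and π(n,0)((n−1)μ+θ+λ) = π(n−1,0)λ + π(n+1,0)nμ + π(n,1)ψn, and in particular P{A=1} = ∑_n π(n,1) = μθ/(μθ+λψ). -/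
/-!
With `λ = λ̃` the protein dynamics is the same birth–death chain (birth `λ`, death `μ` per free
protein) in both gene states, so each conditional distribution is Poisson with mean `a = λ/μ`,
shifted by one in the bound state for the protein held at the gene. The Poisson recursion
`p(n) n = a p(n - 1)` then balances all birth and death fluxes, and what remains of each master
equation is the switching flux balance `ψ n π(n,1) = θ π(n,0)`, i.e. `a ψ w₁ = θ w₀` for the
state weights `w₁ = μθ/(μθ+λψ)`, `w₀ = λψ/(μθ+λψ)`.
-/

open Nat

noncomputable section

def poissonWeight (a : ℝ) (n : ℕ) : ℝ := Real.exp (-a) * a ^ n / n !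

def shiftedPoissonWeight (a : ℝ) : ℕ → ℝ
  | 0 => 0
  | n + 1 => poissonWeight a n

end

theorem shiftedPoissonWeight_succ (a : ℝ) (n : ℕ) :
    shiftedPoissonWeight a (n + 1) = poissonWeight a n :=
  rfl

section PoissonWeight

variable (a : ℝ)

theorem hasSum_poissonWeight : HasSum (poissonWeight a) 1 := by
  have h := (NormedSpace.expSeries_div_hasSum_exp a).mul_left (Real.exp (-a))
  rw [← congrFun Real.exp_eq_exp_ℝ, ← Real.exp_add, neg_add_cancel, Real.exp_zero] at h
  simp only [← mul_div_assoc] at h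
  exact h

theorem poissonWeight_mul_eq (n : ℕ) :
    poissonWeight a n * n = a * shiftedPoissonWeight a n := by
  cases n with
  | zero => simp [shiftedPoissonWeight]
  | succ n =>
    simp only [shiftedPoissonWeight, poissonWeight, factorial_succ, pow_succ, cast_mul]
    field_simp

end PoissonWeight

section MasterEquation

variable {a lam μ θ ψ w₁ w₀ : ℝ}

theorem poissonWeight_balance_unbound (ha : a * μ = lam) (hw : a * ψ * w₁ = θ * w₀) (n : ℕ) :
    poissonWeight a (n + 1) * w₁ * ((n + 1) * (ψ + μ) + lam) =
      poissonWeight a n * w₁ * lam + poissonWeight a (n + 2) * w₁ * (n + 2) * μ +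
        shiftedPoissonWeight a (n + 1) * w₀ * θ := by
  have h₁ := poissonWeight_mul_eq a (n + 1)
  have h₂ := poissonWeight_mul_eq a (n + 2)
  simp only [shiftedPoissonWeight_succ] at h₁ h₂ ⊢
  push_cast at h₁ h₂
  linear_combination (w₁ * (ψ + μ)) * h₁ - (w₁ * μ) * h₂
    + (w₁ * (poissonWeight a n - poissonWeight a (n + 1))) * ha + poissonWeight a n * hw

theorem shiftedPoissonWeight_balance_bound (ha : a * μ = lam) (hw : a * ψ * w₁ = θ * w₀)
    (n : ℕ) :
    shiftedPoissonWeight a (n + 1) * w₀ * (n * μ + θ + lam) =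
      shiftedPoissonWeight a n * w₀ * lam + shiftedPoissonWeight a (n + 2) * w₀ * (n + 1) * μ +
        poissonWeight a (n + 1) * w₁ * ψ * (n + 1) := by
  have h₁ := poissonWeight_mul_eq a n
  have h₂ := poissonWeight_mul_eq a (n + 1)
  simp only [shiftedPoissonWeight_succ] at h₂ ⊢
  push_cast at h₂
  linear_combination (w₀ * μ) * h₁ - (w₀ * μ + w₁ * ψ) * h₂
    + (w₀ * (shiftedPoissonWeight a n - poissonWeight a n)) * ha - poissonWeight a n * hw

end MasterEquation

theorem stmt6_general (lam μ θ ψ : ℝ) (hμ : 0 < μ)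
    (π1 π0 : ℕ → ℝ)
    (hπ1 : ∀ n, π1 n = Real.exp (-(lam / μ)) * (lam / μ) ^ n / (Nat.factorial n)
        * (μ * θ / (μ * θ + lam * ψ)))
    (hπ0 : ∀ n, π0 n = if n = 0 then 0 else
        Real.exp (-(lam / μ)) * (lam / μ) ^ (n - 1) / (Nat.factorial (n - 1))
          * (lam * ψ / (μ * θ + lam * ψ))) :
    (∀ n : ℕ, 1 ≤ n →
        π1 n * (n * (ψ + μ) + lam)
          = π1 (n - 1) * lam + π1 (n + 1) * (n + 1) * μ + π0 n * θ) ∧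
    (∀ n : ℕ, 1 ≤ n →
        π0 n * (((n : ℝ) - 1) * μ + θ + lam)
          = π0 (n - 1) * lam + π0 (n + 1) * n * μ + π1 n * ψ * n) ∧
    (∑' n, π1 n) = μ * θ / (μ * θ + lam * ψ) := by
  have ha : lam / μ * μ = lam := div_mul_cancel₀ lam hμ.ne'
  have hw : lam / μ * ψ * (μ * θ / (μ * θ + lam * ψ)) = θ * (lam * ψ / (μ * θ + lam * ψ)) := by
    field_simp
  have hπ1' : ∀ n, π1 n = poissonWeight (lam / μ) n * (μ * θ / (μ * θ + lam * ψ)) := hπ1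
  have hπ0' : ∀ n, π0 n = shiftedPoissonWeight (lam / μ) n * (lam * ψ / (μ * θ + lam * ψ)) := by
    rintro (_ | n) <;> simp [hπ0, shiftedPoissonWeight, poissonWeight]
  refine ⟨?_, ?_, ?_⟩
  · rintro (_ | n) hn
    · omega
    simp only [hπ1', hπ0', add_tsub_cancel_right]
    push_cast
    linear_combination poissonWeight_balance_unbound ha hw n
  · rintro (_ | n) hn
    · omega
    simp only [hπ1', hπ0', add_tsub_cancel_right]
    push_cast
    linear_combination shiftedPoissonWeight_balance_bound ha hw n
  · simp_rw [hπ1']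
    exact ((hasSum_poissonWeight _).mul_right _).tsum_eq.trans (one_mul _)

/-- For `λ = λ̃` the Poisson/shifted-Poisson distribution solves the steady-state master
equation of the self-regulating gene, and `P{A=1} = μθ/(μθ+λψ)`. -/
theorem stmt6 (lam μ θ ψ : ℝ) (hlam : 0 < lam) (hμ : 0 < μ) (hθ : 0 < θ) (hψ : 0 < ψ)
    (π1 π0 : ℕ → ℝ)
    (hπ1 : ∀ n, π1 n = Real.exp (-(lam / μ)) * (lam / μ) ^ n / (Nat.factorial n)
        * (μ * θ / (μ * θ + lam * ψ)))
    (hπ0 : ∀ n, π0 n = if n = 0 then 0 else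
        Real.exp (-(lam / μ)) * (lam / μ) ^ (n - 1) / (Nat.factorial (n - 1))
          * (lam * ψ / (μ * θ + lam * ψ))) :
    (∀ n : ℕ, 1 ≤ n →
        π1 n * (n * (ψ + μ) + lam)
          = π1 (n - 1) * lam + π1 (n + 1) * (n + 1) * μ + π0 n * θ) ∧
    (∀ n : ℕ, 1 ≤ n →
        π0 n * (((n : ℝ) - 1) * μ + θ + lam)
          = π0 (n - 1) * lam + π0 (n + 1) * n * μ + π1 n * ψ * n) ∧
    (∑' n, π1 n) = μ * θ / (μ * θ + lam * ψ) :=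
  stmt6_general lam μ θ ψ hμ π1 π0 hπ1 hπ0
end

section
/- Let (π(n,j))_{n∈ℕ, j∈{0,1}} be a probability distribution with π(0,0)=0 satisfying the steady-state master equation of the self-regulating gene. Then for every n ≥ 1: π(n,1)μn + π(n,0)μ(n−1) = π(n−1,1)λ + π(n−1,0)λ̃. -/
/-! Adding the two master equations at level `n`, the switching terms `θ` and `ψ n` cancel and
what remains says that the net probability flux between levels `n` and `n + 1` equals the one
between levels `n - 1` and `n`. Below level `0` there is no mass, so this flux is `0` at every
level. -/

/-- Downward flux (degradation) minus upward flux (production) across the cut between protein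
levels `n - 1` and `n`. -/
def netFlux (lam lamt μ : ℝ) (π1 π0 : ℤ → ℝ) (n : ℤ) : ℝ :=
  π1 n * μ * n + π0 n * μ * ((n : ℝ) - 1) - (π1 (n - 1) * lam + π0 (n - 1) * lamt)

section

variable {lam lamt μ θ ψ : ℝ} {π1 π0 : ℤ → ℝ}

theorem netFlux_add_one {n : ℤ}
    (h1 : π1 n * (n * (ψ + μ) + lam)
      = π1 (n - 1) * lam + π1 (n + 1) * (n + 1) * μ + π0 n * θ)
    (h0 : π0 n * (((n : ℝ) - 1) * μ + θ + lamt)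
      = π0 (n - 1) * lamt + π0 (n + 1) * n * μ + π1 n * ψ * n) :
    netFlux lam lamt μ π1 π0 (n + 1) = netFlux lam lamt μ π1 π0 n := by
  unfold netFlux
  push_cast
  simp only [add_sub_cancel_right]
  linear_combination -h1 - h0

theorem netFlux_zero (hπ1 : π1 (-1) = 0) (hπ0 : π0 (-1) = 0) (h00 : π0 0 = 0) :
    netFlux lam lamt μ π1 π0 0 = 0 := by
  simp [netFlux, hπ1, hπ0, h00]

end

theorem stmt7_general (lam lamt μ θ ψ : ℝ)
    (π1 π0 : ℤ → ℝ)
    (hneg : ∀ n : ℤ, n < 0 → π1 n = 0 ∧ π0 n = 0)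
    (h00 : π0 0 = 0)
    (hmaster1 : ∀ n : ℤ, 0 ≤ n →
        π1 n * (n * (ψ + μ) + lam)
          = π1 (n - 1) * lam + π1 (n + 1) * (n + 1) * μ + π0 n * θ)
    (hmaster0 : ∀ n : ℤ, 0 ≤ n →
        π0 n * (((n : ℝ) - 1) * μ + θ + lamt)
          = π0 (n - 1) * lamt + π0 (n + 1) * n * μ + π1 n * ψ * n) :
    ∀ n : ℤ, 1 ≤ n →
      π1 n * μ * n + π0 n * μ * ((n : ℝ) - 1)
        = π1 (n - 1) * lam + π0 (n - 1) * lamt := by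
  have hflux : ∀ n : ℤ, 0 ≤ n → netFlux lam lamt μ π1 π0 n = 0 := by
    intro n hn
    induction n, hn using Int.leInduction with
    | base =>
      obtain ⟨hπ1, hπ0⟩ := hneg (-1) (by norm_num)
      exact netFlux_zero hπ1 hπ0 h00
    | succ k hk ih => rwa [netFlux_add_one (hmaster1 k hk) (hmaster0 k hk)]
  intro n hn
  exact sub_eq_zero.mp (hflux n (by omega))

/-- Flux balance across protein levels: any solution of the steady-state master equation
of the self-regulating gene satisfies
`π(n,1)μn + π(n,0)μ(n−1) = π(n−1,1)λ + π(n−1,0)λ̃` for all `n ≥ 1`. -/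
theorem stmt7 (lam lamt μ θ ψ : ℝ) (hlam : 0 < lam) (hμ : 0 < μ) (hθ : 0 < θ)
    (hψ : 0 < ψ) (hlamt : 0 ≤ lamt)
    (π1 π0 : ℤ → ℝ)
    (hneg : ∀ n : ℤ, n < 0 → π1 n = 0 ∧ π0 n = 0)
    (h00 : π0 0 = 0)
    (hmaster1 : ∀ n : ℤ, 0 ≤ n →
        π1 n * (n * (ψ + μ) + lam)
          = π1 (n - 1) * lam + π1 (n + 1) * (n + 1) * μ + π0 n * θ)
    (hmaster0 : ∀ n : ℤ, 0 ≤ n →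
        π0 n * (((n : ℝ) - 1) * μ + θ + lamt)
          = π0 (n - 1) * lamt + π0 (n + 1) * n * μ + π1 n * ψ * n) :
    ∀ n : ℤ, 1 ≤ n →
      π1 n * μ * n + π0 n * μ * ((n : ℝ) - 1)
        = π1 (n - 1) * lam + π0 (n - 1) * lamt :=
  stmt7_general lam lamt μ θ ψ π1 π0 hneg h00 hmaster1 hmaster0
end

section
/- In the steady state of the self-regulating gene model, E[N] = P{A=0}(1 + λ̃/μ) + P{A=1}·λ/μ, where N is the total protein number and A the gene state. -/
/-!
Summing the master equations for `(n, 1)` and `(n, 0)` gives a telescoping identity whose solution,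
with `π(0,0) = 0` and the boundary equation at `n = 0`, is the flux balance across each level
`n → n + 1`: the downward rate `μ ((n+1) π(n+1,1) + n π(n+1,0))` equals the upward rate
`λ π(n,1) + λ̃ π(n,0)`. Summing over `n` expresses `μ (E[N] - P{A=0})` through `P{A=1}` and `P{A=0}`.
-/

theorem tsum_eq_tsum_of_succ_eq {M : Type*} [AddCommMonoid M] [TopologicalSpace M]
    [ContinuousAdd M] [T2Space M] {F G : ℕ → M} (hG : Summable G) (h0 : F 0 = 0)
    (hsucc : ∀ n, F (n + 1) = G n) : ∑' n, F n = ∑' n, G n := by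
  have hshift : (fun n => F (n + 1)) = G := funext hsucc
  rw [tsum_eq_zero_add' (hshift ▸ hG), h0, zero_add, hshift]

theorem flux_balance {lam lamt μ θ ψ : ℝ} {π1 π0 : ℕ → ℝ} (h00 : π0 0 = 0)
    (hboundary : π1 0 * lam = π1 1 * μ + π0 0 * θ)
    (hmaster1 : ∀ n : ℕ, 1 ≤ n →
        π1 n * (n * (ψ + μ) + lam)
          = π1 (n - 1) * lam + π1 (n + 1) * (n + 1) * μ + π0 n * θ)
    (hmaster0 : ∀ n : ℕ, 1 ≤ n →
        π0 n * (((n : ℝ) - 1) * μ + θ + lamt)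
          = π0 (n - 1) * lamt + π0 (n + 1) * n * μ + π1 n * ψ * n)
    (n : ℕ) :
    μ * (((n : ℝ) + 1) * π1 (n + 1) + n * π0 (n + 1)) = lam * π1 n + lamt * π0 n := by
  induction n with
  | zero =>
    rw [h00] at hboundary ⊢
    linear_combination -hboundary
  | succ n ih =>
    have h1 := hmaster1 (n + 1) n.succ_pos
    have h0 := hmaster0 (n + 1) n.succ_pos
    simp only [Nat.add_sub_cancel] at h1 h0
    push_cast at h1 h0 ⊢
    linear_combination ih - h1 - h0

theorem stmt9_general (lam lamt μ θ ψ : ℝ) (hμ : 0 < μ)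
    (π1 π0 : ℕ → ℝ)
    (h00 : π0 0 = 0)
    (hmom1 : ∀ k : ℕ, Summable (fun n : ℕ => (n : ℝ) ^ k * π1 n))
    (hmom0 : ∀ k : ℕ, Summable (fun n : ℕ => (n : ℝ) ^ k * π0 n))
    (hboundary : π1 0 * lam = π1 1 * μ + π0 0 * θ)
    (hmaster1 : ∀ n : ℕ, 1 ≤ n →
        π1 n * (n * (ψ + μ) + lam)
          = π1 (n - 1) * lam + π1 (n + 1) * (n + 1) * μ + π0 n * θ)
    (hmaster0 : ∀ n : ℕ, 1 ≤ n →
        π0 n * (((n : ℝ) - 1) * μ + θ + lamt)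
          = π0 (n - 1) * lamt + π0 (n + 1) * n * μ + π1 n * ψ * n) :
    ∑' n : ℕ, (n : ℝ) * (π1 n + π0 n)
      = (∑' n, π0 n) * (1 + lamt / μ) + (∑' n, π1 n) * (lam / μ) := by
  have hp1 : Summable π1 := by simpa using hmom1 0
  have hp0 : Summable π0 := by simpa using hmom0 0
  have hs1 : Summable fun n : ℕ => (n : ℝ) * π1 n := by simpa using hmom1 1
  have hs0 : Summable fun n : ℕ => (n : ℝ) * π0 n := by simpa using hmom0 1
  have hbalance : ∑' n : ℕ, μ * ((n : ℝ) * π1 n + n * π0 n - π0 n)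
      = ∑' n, (lam * π1 n + lamt * π0 n) :=
    tsum_eq_tsum_of_succ_eq ((hp1.mul_left lam).add (hp0.mul_left lamt)) (by simp [h00])
      fun n => by
        push_cast
        linear_combination flux_balance h00 hboundary hmaster1 hmaster0 n
  rw [tsum_mul_left, (hs1.add hs0).tsum_sub hp0, hs1.tsum_add hs0,
    (hp1.mul_left lam).tsum_add (hp0.mul_left lamt), tsum_mul_left, tsum_mul_left] at hbalance
  simp only [mul_add]
  rw [hs1.tsum_add hs0]
  field_simp
  linarith

/-- First moment in the steady state:
`E[N] = P{A=0}(1 + λ̃/μ) + P{A=1} λ/μ`. -/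
theorem stmt9 (lam lamt μ θ ψ : ℝ) (hlam : 0 < lam) (hμ : 0 < μ) (hθ : 0 < θ)
    (hψ : 0 < ψ) (hlamt : 0 ≤ lamt)
    (π1 π0 : ℕ → ℝ)
    (hnonneg : ∀ n, 0 ≤ π1 n ∧ 0 ≤ π0 n)
    (h00 : π0 0 = 0)
    (htotal : (∑' n, π1 n) + (∑' n, π0 n) = 1)
    (hmom1 : ∀ k : ℕ, Summable (fun n : ℕ => (n : ℝ) ^ k * π1 n))
    (hmom0 : ∀ k : ℕ, Summable (fun n : ℕ => (n : ℝ) ^ k * π0 n))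
    (hboundary : π1 0 * lam = π1 1 * μ + π0 0 * θ)
    (hmaster1 : ∀ n : ℕ, 1 ≤ n →
        π1 n * (n * (ψ + μ) + lam)
          = π1 (n - 1) * lam + π1 (n + 1) * (n + 1) * μ + π0 n * θ)
    (hmaster0 : ∀ n : ℕ, 1 ≤ n →
        π0 n * (((n : ℝ) - 1) * μ + θ + lamt)
          = π0 (n - 1) * lamt + π0 (n + 1) * n * μ + π1 n * ψ * n) :
    ∑' n : ℕ, (n : ℝ) * (π1 n + π0 n)
      = (∑' n, π0 n) * (1 + lamt / μ) + (∑' n, π1 n) * (lam / μ) :=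
  stmt9_general lam lamt μ θ ψ hμ π1 π0 h00 hmom1 hmom0 hboundary hmaster1 hmaster0
end

section
/- In the steady state of the self-regulating gene model, for every s ∈ ℕ: ψ E[N^{s+1} 1_{A=1}] = θ E[N^s 1_{A=0}] + ∑_{j=1}^s C(s,j)((−1)^j μ E[N^{s−j+1} 1_{A=1}] + λ E[N^{s−j} 1_{A=1}]). -/
/-!
Multiply the master equation for the states `(n, 1)` by `n ^ s` and sum over `n`. After shifting
the index, the gain terms become `λ E[(N + 1) ^ s 1_{A=1}]` and `μ E[N (N - 1) ^ s 1_{A=1}]`;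
expanding both binomially, the `j = 0` terms cancel against the loss terms `λ E[N ^ s 1_{A=1}]`
and `μ E[N ^ (s + 1) 1_{A=1}]`, and what remains is the recursion.
-/

open Finset

noncomputable def moment (p : ℕ → ℝ) (k : ℕ) : ℝ := ∑' n : ℕ, (n : ℝ) ^ k * p n

theorem summable_pow_mul_mul_self {p : ℕ → ℝ}
    (hp : ∀ k, Summable fun n : ℕ => (n : ℝ) ^ k * p n) (k : ℕ) :
    Summable fun n : ℕ => (n : ℝ) ^ k * (n * p n) :=
  (hp (k + 1)).congr fun n => by ring

theorem moment_mul_self (p : ℕ → ℝ) (k : ℕ) :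
    moment (fun n => n * p n) k = moment p (k + 1) :=
  tsum_congr fun n => by ring

theorem summable_add_pow_mul {p : ℕ → ℝ}
    (hp : ∀ k, Summable fun n : ℕ => (n : ℝ) ^ k * p n) (a : ℝ) (s : ℕ) :
    Summable fun n : ℕ => (a + n) ^ s * p n := by
  simp_rw [add_pow, sum_mul]
  exact summable_sum fun j _ => (hp (s - j)).mul_left (a ^ j * s.choose j) |>.congr
    fun n => by ring

theorem tsum_add_pow_mul {p : ℕ → ℝ}
    (hp : ∀ k, Summable fun n : ℕ => (n : ℝ) ^ k * p n) (a : ℝ) (s : ℕ) :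
    ∑' n : ℕ, (a + n) ^ s * p n
      = moment p s + ∑ j ∈ Icc 1 s, (s.choose j : ℝ) * a ^ j * moment p (s - j) := by
  have expand : ∀ n : ℕ, (a + n) ^ s * p n
      = ∑ j ∈ range (s + 1), (s.choose j : ℝ) * a ^ j * ((n : ℝ) ^ (s - j) * p n) := by
    intro n
    rw [add_pow, sum_mul]
    exact sum_congr rfl fun j _ => by ring
  rw [tsum_congr expand, Summable.tsum_finsetSum fun j _ => (hp (s - j)).mul_left _,
    sum_range_eq_add_Ico _ (by omega : 0 < s + 1), Ico_add_one_right_eq_Icc]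
  simp only [tsum_mul_left, moment, Nat.choose_zero_right, Nat.cast_one, pow_zero, one_mul,
    Nat.sub_zero]

theorem moment_balance (lam μ θ ψ : ℝ) {p q : ℕ → ℝ}
    (hp : ∀ k, Summable fun n : ℕ => (n : ℝ) ^ k * p n)
    (hq : ∀ k, Summable fun n : ℕ => (n : ℝ) ^ k * q n)
    (hboundary : p 0 * lam = p 1 * μ + q 0 * θ)
    (hmaster : ∀ n : ℕ, 1 ≤ n →
        p n * (n * (ψ + μ) + lam) = p (n - 1) * lam + p (n + 1) * (n + 1) * μ + q n * θ)
    (s : ℕ) :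
    (ψ + μ) * moment p (s + 1) + lam * moment p s
      = lam * ∑' n : ℕ, (1 + n) ^ s * p n
        + μ * ∑' n : ℕ, (-1 + n) ^ s * (n * p n) + θ * moment q s := by
  set A : ℕ → ℝ := fun n => (n : ℝ) ^ s * (p n * (n * (ψ + μ) + lam))
  set B : ℕ → ℝ := fun n => (1 + n) ^ s * p n
  set C : ℕ → ℝ := fun n => (-1 + n) ^ s * (n * p n)
  set D : ℕ → ℝ := fun n => (n : ℝ) ^ s * q n
  have hA : Summable A :=
    ((hp (s + 1)).mul_left (ψ + μ)).add ((hp s).mul_left lam) |>.congr fun n => by ring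
  have hB : Summable B := summable_add_pow_mul hp 1 s
  have hC : Summable C := summable_add_pow_mul (summable_pow_mul_mul_self hp) (-1) s
  have hD : Summable D := hq s
  have sumA : ∑' n, A n = (ψ + μ) * moment p (s + 1) + lam * moment p s := by
    rw [moment, moment, ← tsum_mul_left, ← tsum_mul_left,
      ← Summable.tsum_add ((hp _).mul_left _) ((hp _).mul_left _)]
    exact tsum_congr fun n => by ring
  have master_zero : A 0 = μ * C 1 + θ * D 0 := by
    simp only [A, C, D]
    push_cast
    linear_combination (0 : ℝ) ^ s * hboundary
  have master_succ : ∀ n : ℕ, A (n + 1) = lam * B n + μ * C (n + 2) + θ * D (n + 1) := by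
    intro n
    have h := hmaster (n + 1) n.succ_pos
    simp only [Nat.add_sub_cancel] at h
    simp only [A, B, C, D]
    push_cast at h ⊢
    linear_combination ((n : ℝ) + 1) ^ s * h
  have hC0 : C 0 = 0 := by simp [C]
  have shiftA := hA.tsum_eq_zero_add
  have shiftC := (hC.sum_add_tsum_nat_add 2).symm
  have shiftD := hD.tsum_eq_zero_add
  rw [tsum_congr master_succ, Summable.tsum_add
    ((hB.mul_left _).add (((summable_nat_add_iff 2).2 hC).mul_left _))
    (((summable_nat_add_iff 1).2 hD).mul_left _),
    Summable.tsum_add (hB.mul_left _) (((summable_nat_add_iff 2).2 hC).mul_left _),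
    tsum_mul_left, tsum_mul_left, tsum_mul_left] at shiftA
  rw [sum_range_succ, sum_range_one, hC0] at shiftC
  rw [← sumA, moment]
  change _ = lam * ∑' n, B n + μ * ∑' n, C n + θ * ∑' n, D n
  rw [shiftA, shiftC, shiftD, master_zero]
  ring

theorem stmt12_general (lam μ θ ψ : ℝ)
    (π1 π0 : ℕ → ℝ)
    (hmom1 : ∀ k : ℕ, Summable (fun n : ℕ => (n : ℝ) ^ k * π1 n))
    (hmom0 : ∀ k : ℕ, Summable (fun n : ℕ => (n : ℝ) ^ k * π0 n))
    (hboundary : π1 0 * lam = π1 1 * μ + π0 0 * θ)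
    (hmaster1 : ∀ n : ℕ, 1 ≤ n →
        π1 n * (n * (ψ + μ) + lam)
          = π1 (n - 1) * lam + π1 (n + 1) * (n + 1) * μ + π0 n * θ)
    (s : ℕ) :
    ψ * ∑' n : ℕ, (n : ℝ) ^ (s + 1) * π1 n
      = θ * (∑' n : ℕ, (n : ℝ) ^ s * π0 n)
        + ∑ j ∈ Finset.Icc 1 s,
            (s.choose j : ℝ)
              * ((-1) ^ j * μ * (∑' n : ℕ, (n : ℝ) ^ (s - j + 1) * π1 n)
                  + lam * ∑' n : ℕ, (n : ℝ) ^ (s - j) * π1 n) := by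
  have balance := moment_balance lam μ θ ψ hmom1 hmom0 hboundary hmaster1 s
  rw [tsum_add_pow_mul hmom1, tsum_add_pow_mul (summable_pow_mul_mul_self hmom1)] at balance
  simp only [moment_mul_self, one_pow, mul_one] at balance
  change ψ * moment π1 (s + 1) = θ * moment π0 s
    + ∑ j ∈ Icc 1 s, (s.choose j : ℝ) * ((-1) ^ j * μ * moment π1 (s - j + 1)
      + lam * moment π1 (s - j))
  have split : ∑ j ∈ Icc 1 s, (s.choose j : ℝ) * ((-1) ^ j * μ * moment π1 (s - j + 1)
        + lam * moment π1 (s - j))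
      = μ * ∑ j ∈ Icc 1 s, (s.choose j : ℝ) * (-1) ^ j * moment π1 (s - j + 1)
        + lam * ∑ j ∈ Icc 1 s, (s.choose j : ℝ) * moment π1 (s - j) := by
    rw [mul_sum, mul_sum, ← sum_add_distrib]
    exact sum_congr rfl fun j _ => by ring
  linear_combination balance - split

/-- Moment recursion in the unbound state: for every `s`,
`ψ E[N^{s+1} 1_{A=1}] = θ E[N^s 1_{A=0}]
  + ∑_{j=1}^s C(s,j)((−1)^j μ E[N^{s−j+1} 1_{A=1}] + λ E[N^{s−j} 1_{A=1}])`. -/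
theorem stmt12 (lam lamt μ θ ψ : ℝ) (hlam : 0 < lam) (hμ : 0 < μ) (hθ : 0 < θ)
    (hψ : 0 < ψ) (hlamt : 0 ≤ lamt)
    (π1 π0 : ℕ → ℝ)
    (hnonneg : ∀ n, 0 ≤ π1 n ∧ 0 ≤ π0 n)
    (h00 : π0 0 = 0)
    (htotal : (∑' n, π1 n) + (∑' n, π0 n) = 1)
    (hmom1 : ∀ k : ℕ, Summable (fun n : ℕ => (n : ℝ) ^ k * π1 n))
    (hmom0 : ∀ k : ℕ, Summable (fun n : ℕ => (n : ℝ) ^ k * π0 n))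
    (hboundary : π1 0 * lam = π1 1 * μ + π0 0 * θ)
    (hmaster1 : ∀ n : ℕ, 1 ≤ n →
        π1 n * (n * (ψ + μ) + lam)
          = π1 (n - 1) * lam + π1 (n + 1) * (n + 1) * μ + π0 n * θ)
    (hmaster0 : ∀ n : ℕ, 1 ≤ n →
        π0 n * (((n : ℝ) - 1) * μ + θ + lamt)
          = π0 (n - 1) * lamt + π0 (n + 1) * n * μ + π1 n * ψ * n)
    (s : ℕ) :
    ψ * ∑' n : ℕ, (n : ℝ) ^ (s + 1) * π1 n
      = θ * (∑' n : ℕ, (n : ℝ) ^ s * π0 n)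
        + ∑ j ∈ Finset.Icc 1 s,
            (s.choose j : ℝ)
              * ((-1) ^ j * μ * (∑' n : ℕ, (n : ℝ) ^ (s - j + 1) * π1 n)
                  + lam * ∑' n : ℕ, (n : ℝ) ^ (s - j) * π1 n) :=
  stmt12_general lam μ θ ψ π1 π0 hmom1 hmom0 hboundary hmaster1 s
end

section
/- Let μ, ψ, θ, λ̃ > 0. Define f(m) = (λ̃+μ)/(θ+μ) + (θ/(θ+μ))·((μ+ψ)/ψ)·(1 − (μ/(μ+ψ))^m(1 + mψ/(μ+ψ))) for m ≥ 1. Then f is monotone increasing in m and for all m ≥ 1: (λ̃+μ)/(θ+μ) + (θ/(θ+μ))·ψ/(μ+ψ) ≤ f(m) ≤ (λ̃+μ)/(θ+μ) + (θ/(θ+μ))·(μ+ψ)/ψ. -/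
/-! With `s = ψ / (μ + ψ)`, so that `μ / (μ + ψ) = 1 - s`, the function is
`f m = A + B (1 - (1 - s) ^ m (1 + m s))` with `B = θ / (θ + μ) · (μ + ψ) / ψ ≥ 0`.
Since `(1 - s) (1 + (m + 1) s) = 1 + m s - (m + 1) s²`, the factor `(1 - s) ^ m (1 + m s)` is
decreasing in `m`; it is nonnegative, which gives the upper bound, and at `m = 1` it equals
`1 - s²`, which gives the lower bound because `B s² = θ / (θ + μ) · s`. -/

section

variable {s : ℝ}

theorem antitone_one_sub_pow_mul_one_add_mul (hs1 : s ≤ 1) :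
    Antitone fun m : ℕ => (1 - s) ^ m * (1 + m * s) := by
  refine antitone_nat_of_succ_le fun m => ?_
  have hstep : (1 - s) * (1 + (m + 1) * s) ≤ 1 + m * s := by
    nlinarith [mul_nonneg (Nat.cast_nonneg m : (0 : ℝ) ≤ m) (sq_nonneg s)]
  calc (1 - s) ^ (m + 1) * (1 + ((m + 1 : ℕ) : ℝ) * s)
      = (1 - s) ^ m * ((1 - s) * (1 + (m + 1) * s)) := by push_cast; ring
    _ ≤ (1 - s) ^ m * (1 + m * s) :=
      mul_le_mul_of_nonneg_left hstep (pow_nonneg (sub_nonneg.2 hs1) m)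

theorem one_sub_pow_mul_one_add_mul_nonneg (hs0 : 0 ≤ s) (hs1 : s ≤ 1) (m : ℕ) :
    0 ≤ (1 - s) ^ m * (1 + m * s) := by
  have := sub_nonneg.2 hs1
  positivity

end

theorem stmt15_general (μ ψ θ lamt : ℝ) (hμ : 0 < μ) (hψ : 0 < ψ) (hθ : 0 < θ)
    (f : ℕ → ℝ)
    (hf : ∀ m : ℕ, f m = (lamt + μ) / (θ + μ)
        + (θ / (θ + μ)) * ((μ + ψ) / ψ)
            * (1 - (μ / (μ + ψ)) ^ m * (1 + m * ψ / (μ + ψ)))) :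
    (∀ m : ℕ, 1 ≤ m → f m ≤ f (m + 1)) ∧
    (∀ m : ℕ, 1 ≤ m →
        (lamt + μ) / (θ + μ) + (θ / (θ + μ)) * (ψ / (μ + ψ)) ≤ f m ∧
        f m ≤ (lamt + μ) / (θ + μ) + (θ / (θ + μ)) * ((μ + ψ) / ψ)) := by
  have hμψ : 0 < μ + ψ := by positivity
  have hs0 : 0 ≤ ψ / (μ + ψ) := by positivity
  have hs1 : ψ / (μ + ψ) ≤ 1 := div_le_one_of_le₀ (by linarith) hμψ.le
  have hB : 0 ≤ θ / (θ + μ) * ((μ + ψ) / ψ) := by positivity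
  have hf' : ∀ m : ℕ, f m = (lamt + μ) / (θ + μ) + θ / (θ + μ) * ((μ + ψ) / ψ)
      * (1 - (1 - ψ / (μ + ψ)) ^ m * (1 + m * (ψ / (μ + ψ)))) := by
    intro m
    rw [hf m, mul_div_assoc, show μ / (μ + ψ) = 1 - ψ / (μ + ψ) by field_simp; ring]
  have hlow : θ / (θ + μ) * ((μ + ψ) / ψ)
      * (1 - (1 - ψ / (μ + ψ)) ^ 1 * (1 + ((1 : ℕ) : ℝ) * (ψ / (μ + ψ))))
      = θ / (θ + μ) * (ψ / (μ + ψ)) := by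
    field_simp
    ring
  have hanti := antitone_one_sub_pow_mul_one_add_mul hs1
  refine ⟨fun m _ => ?_, fun m hm => ⟨?_, ?_⟩⟩
  · rw [hf', hf']
    gcongr _ + _ * (1 - ?_)
    exact hanti m.le_succ
  · rw [hf', ← hlow]
    gcongr _ + _ * (1 - ?_)
    exact hanti hm
  · rw [hf']
    have := one_sub_pow_mul_one_add_mul_nonneg hs0 hs1 m
    linarith [mul_le_of_le_one_right hB (sub_le_self 1 this)]

/-- `f(m) = E[C₂ | C₁ = m]` is monotone increasing in `m ≥ 1` and bounded between
`f(1)` and `lim_{m→∞} f(m)`. -/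
theorem stmt15 (μ ψ θ lamt : ℝ) (hμ : 0 < μ) (hψ : 0 < ψ) (hθ : 0 < θ)
    (hlamt : 0 < lamt)
    (f : ℕ → ℝ)
    (hf : ∀ m : ℕ, f m = (lamt + μ) / (θ + μ)
        + (θ / (θ + μ)) * ((μ + ψ) / ψ)
            * (1 - (μ / (μ + ψ)) ^ m * (1 + m * ψ / (μ + ψ)))) :
    (∀ m : ℕ, 1 ≤ m → f m ≤ f (m + 1)) ∧
    (∀ m : ℕ, 1 ≤ m →
        (lamt + μ) / (θ + μ) + (θ / (θ + μ)) * (ψ / (μ + ψ)) ≤ f m ∧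
        f m ≤ (lamt + μ) / (θ + μ) + (θ / (θ + μ)) * ((μ + ψ) / ψ)) :=
  stmt15_general μ ψ θ lamt hμ hψ hθ f hf
end

section
/- Let θ, ψ, c > 0. Then E₀ := (1/(2ψ))(ψ − θ + √((ψ−θ)² + 4θψc)) satisfies E₀ ≥ c(θ+ψ)/(θ+cψ) =: E_∞, with equality if and only if c = 1. -/
/-! `E₀` is the positive root of `q(x) = ψ x² + (θ - ψ) x - θ c`, and clearing denominators gives
`(θ + c ψ)² q(E_∞) = -c θ ψ² (c - 1)²`. Since `q` has positive leading coefficient, `q(E_∞) ≤ 0`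
places `E_∞` below the larger root `E₀`, and `E_∞ = E₀` forces `q(E_∞) = 0`, i.e. `c = 1`. -/

theorem le_quadratic_root_of_nonpos {a b d x : ℝ} (ha : 0 < a)
    (hx : a * (x * x) + b * x + d ≤ 0) : x ≤ (-b + √(discrim a b d)) / (2 * a) := by
  have hsq : (2 * a * x + b) ^ 2 ≤ discrim a b d := by
    have := mul_le_mul_of_nonneg_left hx (by positivity : (0 : ℝ) ≤ 4 * a)
    unfold discrim
    nlinarith
  rw [le_div_iff₀ (by positivity)]
  linarith [Real.le_sqrt_of_sq_le hsq]

theorem quadratic_eq_zero_at_root {a b d : ℝ} (ha : a ≠ 0) (hD : 0 ≤ discrim a b d) :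
    a * ((-b + √(discrim a b d)) / (2 * a) * ((-b + √(discrim a b d)) / (2 * a)))
      + b * ((-b + √(discrim a b d)) / (2 * a)) + d = 0 :=
  (quadratic_eq_zero_iff ha (Real.mul_self_sqrt hD).symm _).2 (Or.inl rfl)

theorem selfRegulating_quadratic_at_limit {θ ψ c E : ℝ} (hs : θ + c * ψ ≠ 0)
    (hE : E = c * (θ + ψ) / (θ + c * ψ)) :
    ψ * (E * E) + (θ - ψ) * E + -(θ * c) = -(c * θ * ψ ^ 2 * (c - 1) ^ 2) / (θ + c * ψ) ^ 2 := by
  replace hE : E * (θ + c * ψ) = c * (θ + ψ) := by rw [hE, div_mul_cancel₀ _ hs]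
  rw [eq_div_iff (pow_ne_zero 2 hs)]
  linear_combination (ψ * (E * (θ + c * ψ) + c * (θ + ψ)) + (θ - ψ) * (θ + c * ψ)) * hE

/-- The deterministic steady-state mean `E₀` dominates the `μ → ∞` stochastic limit
`E_∞ = c(θ+ψ)/(θ+cψ)`, with equality iff `c = 1`. -/
theorem stmt17 (θ ψ c : ℝ) (hθ : 0 < θ) (hψ : 0 < ψ) (hc : 0 < c) :
    c * (θ + ψ) / (θ + c * ψ)
        ≤ (1 / (2 * ψ)) * (ψ - θ + Real.sqrt ((ψ - θ) ^ 2 + 4 * θ * ψ * c)) ∧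
    ((1 / (2 * ψ)) * (ψ - θ + Real.sqrt ((ψ - θ) ^ 2 + 4 * θ * ψ * c))
        = c * (θ + ψ) / (θ + c * ψ) ↔ c = 1) := by
  have hD : discrim ψ (θ - ψ) (-(θ * c)) = (ψ - θ) ^ 2 + 4 * θ * ψ * c := by
    unfold discrim; ring
  have hE₀ : (1 / (2 * ψ)) * (ψ - θ + √((ψ - θ) ^ 2 + 4 * θ * ψ * c))
      = (-(θ - ψ) + √(discrim ψ (θ - ψ) (-(θ * c)))) / (2 * ψ) := by
    rw [hD]; ring
  have hq := selfRegulating_quadratic_at_limit (by positivity : θ + c * ψ ≠ 0) rfl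
  rw [hE₀]
  refine ⟨le_quadratic_root_of_nonpos hψ ?_, ⟨fun h => ?_, fun h => ?_⟩⟩
  · rw [hq]
    exact div_nonpos_of_nonpos_of_nonneg (neg_nonpos.2 (by positivity)) (by positivity)
  · have hroot := quadratic_eq_zero_at_root (b := θ - ψ) (d := -(θ * c)) hψ.ne'
      (by rw [hD]; positivity)
    rw [h, hq, neg_div, neg_eq_zero, div_eq_zero_iff] at hroot
    have hs : (θ + c * ψ) ^ 2 ≠ 0 := by positivity
    simpa [hc.ne', hθ.ne', hψ.ne', hs, sub_eq_zero] using hroot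
  · subst h
    rw [hD, show (ψ - θ) ^ 2 + 4 * θ * ψ * 1 = (ψ + θ) ^ 2 by ring, Real.sqrt_sq (by positivity)]
    field_simp
    ring
end
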